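/- Let n ≥ 2 and k be positive integers with k ≥ n-1 and k ≤ 2. Then no two-element set of vertices of the Kneser graph K(2n+k,n) is a geodetic hull set; that is, for all vertices x and y, H[{x,y}] ≠ V(K(2n+k,n)). -/

import Mathlib

/-- The Kneser graph `K(m, n)`: vertices are the `n`-element subsets of an `m`-element
ground set, with edges between disjoint sets. -/
def KneserGraph (m n : ℕ) : SimpleGraph {s : Finset (Fin m) // s.card = n} where
  Adj u v := Disjoint u.1 v.1 ∧ u ≠ v
  symm := ⟨fun u v ⟨h, hne⟩ => ⟨h.symm, hne.symm⟩⟩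
  loopless := ⟨fun u ⟨_, h⟩ => h rfl⟩

/-- The geodetic interval `I[u,v]`: all vertices lying on some shortest `u,v`-path. -/
def geodInterval {V : Type*} (G : SimpleGraph V) (u v : V) : Set V :=
  {w | G.dist u w + G.dist w v = G.dist u v}

/-- `I[W] = ⋃_{u,v ∈ W} I[u,v]`. -/
def geodIntervalSet {V : Type*} (G : SimpleGraph V) (W : Set V) : Set V :=
  ⋃ (u ∈ W) (v ∈ W), geodInterval G u v

/-- `W` is a geodetic set if `I[W] = V(G)`. -/
def IsGeodeticSet {V : Type*} (G : SimpleGraph V) (W : Set V) : Prop :=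
  geodIntervalSet G W = Set.univ

/-- `W` is geodetically convex if `I[W] = W`. -/
def IsGConvex {V : Type*} (G : SimpleGraph V) (W : Set V) : Prop :=
  geodIntervalSet G W = W

/-- The geodetic hull `H[W]`: the smallest g-convex set containing `W`. -/
def geodHull {V : Type*} (G : SimpleGraph V) (W : Set V) : Set V :=
  ⋂₀ {C | IsGConvex G C ∧ W ⊆ C}

/-- `W` is a geodetic hull set if `H[W] = V(G)`. -/
def IsGeodHullSet {V : Type*} (G : SimpleGraph V) (W : Set V) : Prop :=
  geodHull G W = Set.univ

/-- The geodetic number: minimum cardinality of a geodetic set. -/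
noncomputable def geodeticNumber {V : Type*} (G : SimpleGraph V) : ℕ :=
  sInf {m | ∃ W : Set V, IsGeodeticSet G W ∧ W.ncard = m}

/-- The geodetic hull number: minimum cardinality of a geodetic hull set. -/
noncomputable def geodHullNumber {V : Type*} (G : SimpleGraph V) : ℕ :=
  sInf {m | ∃ W : Set V, IsGeodHullSet G W ∧ W.ncard = m}

/-- The function `H(n,k)` from the paper. -/
def Hfun (n k : ℕ) : ℕ := if n % k ≤ 1 then n % k + k - 2 else n % k - 2

/-- `p = (⌈(n-1)/(2k)⌉ - 1)·k + 1`, computed in `ℤ`. -/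
def pInt (n k : ℕ) : ℤ := (⌈((n : ℚ) - 1) / (2 * k)⌉ - 1) * k + 1

/-!
In `K(2n+k, n)` with `n ≤ k + 1` two non-disjoint vertices have a common neighbour, so the graph
has diameter at most 2 and a set is g-convex as soon as it contains the common neighbours of each
of its non-adjacent pairs. With `k ≤ 2`, hence `n ≤ 3`, every pair `{x, y}` then lies in a proper
g-convex set:
* `{x, y}` itself, if it is a clique;
* the vertices contained in or disjoint from `S = x ∪ y`, if `|S| = n + 1`: two distinct
  `n`-subsets of a set with at most `n + 1` elements cover it, and this applies to `S` and `Sᶜ`;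
* otherwise `n = 3`, `k = 2`, `|S| = 5`, and `{x, y, Sᶜ}` works because `Sᶜ` is the only common
  neighbour of `x` and `y`.
-/

theorem Finset.card_lt_card_union_of_ne {α : Type*} [DecidableEq α] {u v : Finset α}
    (hcard : u.card = v.card) (huv : u ≠ v) : u.card < (u ∪ v).card := by
  refine Finset.card_lt_card (Finset.ssubset_iff_subset_ne.2 ⟨Finset.subset_union_left, ?_⟩)
  intro hu
  have hvu : v ⊆ u := by
    rw [hu]
    exact Finset.subset_union_right
  exact huv (Finset.eq_of_subset_of_card_le hvu hcard.le).symm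

theorem Finset.union_eq_of_card_le_succ {α : Type*} [DecidableEq α] {n : ℕ} {u v T : Finset α}
    (hT : T.card ≤ n + 1) (hu : u ⊆ T) (hv : v ⊆ T) (hun : u.card = n) (hvn : v.card = n)
    (huv : u ≠ v) : u ∪ v = T := by
  have := Finset.card_lt_card_union_of_ne (hun.trans hvn.symm) huv
  exact Finset.eq_of_subset_of_card_le (Finset.union_subset hu hv) (by omega)

section GeodeticConvexity

open SimpleGraph

variable {V : Type*} {G : SimpleGraph V} {C W : Set V}

theorem isGConvex_iff : IsGConvex G C ↔ ∀ u ∈ C, ∀ v ∈ C, geodInterval G u v ⊆ C := by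
  refine ⟨fun h u hu v hv w hw => ?_, fun h => ?_⟩
  · rw [← h]
    exact Set.mem_biUnion hu (Set.mem_biUnion hv hw)
  · refine (Set.iUnion₂_subset fun u hu => Set.iUnion₂_subset fun v hv => h u hu v hv).antisymm
      fun w hw => Set.mem_biUnion hw (Set.mem_biUnion hw ?_)
    simp [geodInterval]

theorem geodHull_ne_univ_of_isGConvex (hC : IsGConvex G C) (hWC : W ⊆ C) (hC' : C ≠ Set.univ) :
    geodHull G W ≠ Set.univ :=
  fun h => hC' (Set.univ_subset_iff.1 (h ▸ Set.sInter_subset_of_mem ⟨hC, hWC⟩))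

theorem SimpleGraph.Connected.mem_geodInterval_of_dist_le_two (hG : G.Connected) {u v w : V}
    (huv : G.dist u v ≤ 2) (hw : w ∈ geodInterval G u v) :
    w = u ∨ w = v ∨ G.Adj u w ∧ G.Adj w v ∧ G.dist u v = 2 := by
  have hsum : G.dist u w + G.dist w v = G.dist u v := hw
  by_cases huw : G.dist u w = 0
  · exact Or.inl (hG.dist_eq_zero_iff.1 huw).symm
  by_cases hwv : G.dist w v = 0
  · exact Or.inr (Or.inl (hG.dist_eq_zero_iff.1 hwv))
  exact Or.inr (Or.inr ⟨dist_eq_one_iff_adj.1 (by omega), dist_eq_one_iff_adj.1 (by omega),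
    by omega⟩)

theorem SimpleGraph.IsClique.isGConvex (hG : G.Connected) (hC : G.IsClique C) : IsGConvex G C := by
  refine isGConvex_iff.2 fun u hu v hv w hw => ?_
  have huv : G.dist u v ≤ 1 := by
    by_cases h : u = v
    · simp [h]
    · exact (dist_eq_one_iff_adj.2 (hC hu hv h)).le
  rcases hG.mem_geodInterval_of_dist_le_two (by omega) hw with rfl | rfl | ⟨-, -, h⟩
  · exact hu
  · exact hv
  · omega

theorem isGConvex_of_forall_commonNeighbor (hG : G.Connected) (hdiam : ∀ u v, G.dist u v ≤ 2)
    (hC : ∀ u ∈ C, ∀ v ∈ C, u ≠ v → ¬G.Adj u v → ∀ w, G.Adj u w → G.Adj w v → w ∈ C) :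
    IsGConvex G C := by
  refine isGConvex_iff.2 fun u hu v hv w hw => ?_
  rcases hG.mem_geodInterval_of_dist_le_two (hdiam u v) hw with rfl | rfl | ⟨huw, hwv, h⟩
  · exact hu
  · exact hv
  · refine hC u hu v hv (fun he => ?_) (fun ha => ?_) w huw hwv
    · simp [he] at h
    · simp [dist_eq_one_iff_adj.2 ha] at h

theorem isGConvex_of_unique_commonNeighbor (hG : G.Connected) (hdiam : ∀ u v, G.dist u v ≤ 2)
    {x y c : V} (hcx : G.Adj c x) (hcy : G.Adj c y) (hc : ∀ w, G.Adj x w → G.Adj w y → w = c) :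
    IsGConvex G {x, y, c} := by
  refine isGConvex_of_forall_commonNeighbor hG hdiam ?_
  rintro u (rfl | rfl | rfl) v (rfl | rfl | rfl) huv hadj w huw hwv <;>
    simp_all [adj_comm]

end GeodeticConvexity

namespace KneserGraph

open SimpleGraph

variable {m n : ℕ} {u v : {s : Finset (Fin m) // s.card = n}}

theorem adj_iff (hn : n ≠ 0) : (KneserGraph m n).Adj u v ↔ Disjoint u.1 v.1 := by
  refine ⟨And.left, fun h => ⟨h, fun he => ?_⟩⟩
  subst he
  have := u.2
  simp_all

theorem exists_superset {s : Finset (Fin m)} (hs : s.card ≤ n) (hnm : n ≤ m) :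
    ∃ w : {s : Finset (Fin m) // s.card = n}, s ⊆ w.1 := by
  obtain ⟨w, hsw, hw⟩ := Finset.exists_superset_card_eq hs (by simpa using hnm)
  exact ⟨⟨w, hw⟩, hsw⟩

theorem exists_disjoint {t : Finset (Fin m)} (ht : t.card + n ≤ m) :
    ∃ w : {s : Finset (Fin m) // s.card = n}, Disjoint w.1 t := by
  obtain ⟨w, hwt, hw⟩ := Finset.exists_subset_card_eq (s := tᶜ) (n := n)
    (by rw [Finset.card_compl, Fintype.card_fin]; omega)
  exact ⟨⟨w, hw⟩, Finset.subset_compl_iff_disjoint_right.1 hwt⟩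

theorem exists_walk_length_le_two (hn : n ≠ 0) (hm : 3 * n ≤ m + 1)
    (u v : {s : Finset (Fin m) // s.card = n}) :
    ∃ p : (KneserGraph m n).Walk u v, p.length ≤ 2 := by
  by_cases huv : u = v
  · subst huv
    exact ⟨Walk.nil, by simp⟩
  by_cases hd : Disjoint u.1 v.1
  · exact ⟨((adj_iff hn).2 hd).toWalk, by simp⟩
  -- `|u ∪ v| ≤ 2n - 1`, so its complement has at least `n` elements
  have hinter := Finset.card_pos.2 (Finset.not_disjoint_iff_nonempty_inter.1 hd)
  have hunion := Finset.card_union_add_card_inter u.1 v.1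
  obtain ⟨w, hw⟩ := exists_disjoint (n := n) (t := u.1 ∪ v.1) (by rw [u.2, v.2] at hunion; omega)
  rw [Finset.disjoint_union_right] at hw
  exact ⟨Walk.cons ((adj_iff hn).2 hw.1.symm) ((adj_iff hn).2 hw.2).toWalk, by simp⟩

theorem connected (hn : n ≠ 0) (hm : 3 * n ≤ m + 1) : (KneserGraph m n).Connected := by
  obtain ⟨w, -⟩ := exists_superset (m := m) (n := n) (s := ∅) (Nat.zero_le n) (by omega)
  have : Nonempty {s : Finset (Fin m) // s.card = n} := ⟨w⟩
  exact ⟨fun u v => (exists_walk_length_le_two hn hm u v).elim fun p _ => p.reachable⟩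

theorem dist_le_two (hn : n ≠ 0) (hm : 3 * n ≤ m + 1) (u v : {s : Finset (Fin m) // s.card = n}) :
    (KneserGraph m n).dist u v ≤ 2 :=
  (exists_walk_length_le_two hn hm u v).elim fun p hp => (dist_le p).trans hp

theorem three_lt_card (hn : 2 ≤ n) (hm : n + 2 ≤ m) :
    3 < Nat.card {s : Finset (Fin m) // s.card = n} := by
  rw [Nat.card_eq_fintype_card, Fintype.card_finset_len, Fintype.card_fin]
  calc 3 < (4).choose 2 := by decide
    _ ≤ (n + 2).choose 2 := Nat.choose_le_choose 2 (by omega)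
    _ = (n + 2).choose n := Nat.choose_symm_add.symm
    _ ≤ m.choose n := Nat.choose_le_choose n hm

theorem ne_univ_of_ncard_le_three (hn : 2 ≤ n) (hm : n + 2 ≤ m)
    {C : Set {s : Finset (Fin m) // s.card = n}} (hC : C.ncard ≤ 3) : C ≠ Set.univ := by
  rintro rfl
  have := three_lt_card hn hm
  rw [Set.ncard_univ] at hC
  omega

variable {C : Set {s : Finset (Fin m) // s.card = n}}

theorem isGConvex_of_forall_disjoint (hn : n ≠ 0) (hm : 3 * n ≤ m + 1)
    (hC : ∀ u ∈ C, ∀ v ∈ C, u ≠ v → ¬Disjoint u.1 v.1 →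
      ∀ w : {s : Finset (Fin m) // s.card = n}, Disjoint w.1 (u.1 ∪ v.1) → w ∈ C) :
    IsGConvex (KneserGraph m n) C := by
  refine isGConvex_of_forall_commonNeighbor (connected hn hm) (dist_le_two hn hm) ?_
  intro u hu v hv huv hadj w huw hwv
  rw [adj_iff hn] at hadj huw hwv
  exact hC u hu v hv huv hadj w (Finset.disjoint_union_right.2 ⟨huw.symm, hwv⟩)

theorem isGConvex_setOf_subset_or_disjoint (hn : n ≠ 0) (hm : 3 * n ≤ m + 1) (hm' : m ≤ 2 * n + 2)
    {S : Finset (Fin m)} (hS : S.card = n + 1) :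
    IsGConvex (KneserGraph m n) {w | w.1 ⊆ S ∨ Disjoint w.1 S} := by
  have hSc : Sᶜ.card ≤ n + 1 := by
    rw [Finset.card_compl, Fintype.card_fin]
    omega
  refine isGConvex_of_forall_disjoint hn hm ?_
  rintro u (hu | hu) v (hv | hv) huv hd w hw
  · rw [Finset.union_eq_of_card_le_succ hS.le hu hv u.2 v.2 (Subtype.coe_ne_coe.2 huv)] at hw
    exact Or.inr hw
  · exact (hd (hv.mono_right hu).symm).elim
  · exact (hd (hu.mono_right hv)).elim
  · rw [← Finset.subset_compl_iff_disjoint_right] at hu hv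
    rw [Finset.union_eq_of_card_le_succ hSc hu hv u.2 v.2 (Subtype.coe_ne_coe.2 huv),
      disjoint_compl_right_iff] at hw
    exact Or.inl hw

theorem setOf_subset_or_disjoint_ne_univ (hn : 2 ≤ n) (hnm : n ≤ m) {S : Finset (Fin m)}
    (hS : S.Nonempty) (hS' : Sᶜ.Nonempty) :
    {w : {s : Finset (Fin m) // s.card = n} | w.1 ⊆ S ∨ Disjoint w.1 S} ≠ Set.univ := by
  obtain ⟨a, ha⟩ := hS
  obtain ⟨b, hb⟩ := hS'
  obtain ⟨w, hw⟩ := exists_superset (n := n) (s := {a, b})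
    ((Finset.card_insert_le a {b}).trans (by simpa using hn)) hnm
  intro h
  rcases Set.eq_univ_iff_forall.1 h w with hwS | hwS
  · exact Finset.mem_compl.1 hb (hwS (hw (by simp)))
  · exact Finset.disjoint_left.1 hwS (hw (by simp)) ha

theorem isGConvex_insert_compl_union (hn : n ≠ 0) (hm : 3 * n ≤ m + 1)
    (x y : {s : Finset (Fin m) // s.card = n}) (hc : (x.1 ∪ y.1)ᶜ.card = n) :
    IsGConvex (KneserGraph m n) {x, y, ⟨(x.1 ∪ y.1)ᶜ, hc⟩} := by
  have hcxy : Disjoint (x.1 ∪ y.1)ᶜ (x.1 ∪ y.1) := disjoint_compl_left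
  rw [Finset.disjoint_union_right] at hcxy
  refine isGConvex_of_unique_commonNeighbor (connected hn hm) (dist_le_two hn hm)
    ((adj_iff hn).2 hcxy.1) ((adj_iff hn).2 hcxy.2) fun w hxw hwy => ?_
  rw [adj_iff hn] at hxw hwy
  have hw : w.1 ⊆ (x.1 ∪ y.1)ᶜ :=
    Finset.subset_compl_iff_disjoint_right.2 (Finset.disjoint_union_right.2 ⟨hxw.symm, hwy⟩)
  exact Subtype.ext (Finset.eq_of_subset_of_card_le hw (by rw [hc, w.2]))

variable {x y : {s : Finset (Fin m) // s.card = n}}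

theorem geodHull_pair_ne_univ_of_isClique (hn : 2 ≤ n) (hm : 3 * n ≤ m + 1)
    (hxy : (KneserGraph m n).IsClique {x, y}) : geodHull (KneserGraph m n) {x, y} ≠ Set.univ :=
  geodHull_ne_univ_of_isGConvex (hxy.isGConvex (connected (by omega) hm)) subset_rfl
    (ne_univ_of_ncard_le_three hn (by omega) ((Set.ncard_insert_le _ _).trans (by simp)))

theorem geodHull_pair_ne_univ_of_card_union_eq_succ (hn : 2 ≤ n) (hm : 3 * n ≤ m + 1)
    (hm' : m ≤ 2 * n + 2) (hxy : (x.1 ∪ y.1).card = n + 1) :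
    geodHull (KneserGraph m n) {x, y} ≠ Set.univ := by
  refine geodHull_ne_univ_of_isGConvex
    (isGConvex_setOf_subset_or_disjoint (by omega) hm hm' hxy)
    (Set.pair_subset (Or.inl Finset.subset_union_left) (Or.inl Finset.subset_union_right))
    (setOf_subset_or_disjoint_ne_univ hn (by omega) (Finset.card_pos.1 (by omega)) ?_)
  rw [← Finset.card_pos, Finset.card_compl, Fintype.card_fin]
  omega

theorem geodHull_pair_ne_univ_of_card_compl_union (hn : 2 ≤ n) (hm : 3 * n ≤ m + 1)
    (hc : (x.1 ∪ y.1)ᶜ.card = n) : geodHull (KneserGraph m n) {x, y} ≠ Set.univ :=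
  geodHull_ne_univ_of_isGConvex (isGConvex_insert_compl_union (by omega) hm x y hc)
    (Set.insert_subset_insert (Set.singleton_subset_iff.2 (Set.mem_insert _ _)))
    (ne_univ_of_ncard_le_three hn (by omega) ((Set.ncard_insert_le _ _).trans
      (Nat.succ_le_succ ((Set.ncard_insert_le _ _).trans (by simp)))))

end KneserGraph

theorem no_pair_isGeodHullSet_of_k_le_two_general
    (n k : ℕ) (hn : 2 ≤ n) (hkn : n - 1 ≤ k) (hk2 : k ≤ 2) :
    ∀ x y : {s : Finset (Fin (2 * n + k)) // s.card = n},
      geodHull (KneserGraph (2 * n + k) n) {x, y} ≠ Set.univ := by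
  intro x y
  have hm : 3 * n ≤ 2 * n + k + 1 := by omega
  by_cases hclique : (KneserGraph (2 * n + k) n).IsClique {x, y}
  · exact KneserGraph.geodHull_pair_ne_univ_of_isClique hn hm hclique
  obtain ⟨hxy, hd⟩ : x ≠ y ∧ ¬Disjoint x.1 y.1 := by
    simpa [SimpleGraph.isClique_pair, KneserGraph.adj_iff (show n ≠ 0 by omega)] using hclique
  have hunion := Finset.card_union_add_card_inter x.1 y.1
  have hinter := Finset.card_pos.2 (Finset.not_disjoint_iff_nonempty_inter.1 hd)
  have hlt := Finset.card_lt_card_union_of_ne (x.2.trans y.2.symm) (Subtype.coe_ne_coe.2 hxy)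
  rw [x.2, y.2] at hunion
  rw [x.2] at hlt
  by_cases hA : (x.1 ∪ y.1).card = n + 1
  · exact KneserGraph.geodHull_pair_ne_univ_of_card_union_eq_succ hn hm (by omega) hA
  -- otherwise `n = 3`, `k = 2` and `|x ∪ y| = 5`
  refine KneserGraph.geodHull_pair_ne_univ_of_card_compl_union hn hm ?_
  rw [Finset.card_compl, Fintype.card_fin]
  omega

theorem no_pair_isGeodHullSet_of_k_le_two
    (n k : ℕ) (hn : 2 ≤ n) (hk : 0 < k) (hkn : n - 1 ≤ k) (hk2 : k ≤ 2) :
    ∀ x y : {s : Finset (Fin (2 * n + k)) // s.card = n},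
      geodHull (KneserGraph (2 * n + k) n) {x, y} ≠ Set.univ :=
  no_pair_isGeodHullSet_of_k_le_two_general n k hn hkn hk2
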